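/- Let n ≥ 1, let R : ℝ → Matrix (Fin n) (Fin n) ℝ be continuous with R(t) symmetric for every t, and let U, S be Lagrangian Jacobi solutions along R with U(0) = S(0) = 1. Then for every t such that U(t) and S(t) are invertible, the matrices U'(t) * U(t)⁻¹ and S'(t) * S(t)⁻¹ are symmetric and U'(t) * U(t)⁻¹ − S'(t) * S(t)⁻¹ = (U(t)ᵀ)⁻¹ * (U'(0) − S'(0)) * S(t)⁻¹ = (S(t)ᵀ)⁻¹ * (U'(0) − S'(0)) * U(t)⁻¹. -/

import Mathlib

open Matrix MeasureTheory

attribute [local instance] Matrix.normedAddCommGroup Matrix.normedSpace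

/-- A Jacobi solution along `R`: a twice continuously differentiable matrix-valued
map `Y` satisfying `Y'' + R Y = 0`. -/
def IsJacobi {n : ℕ} (R Y : ℝ → Matrix (Fin n) (Fin n) ℝ) : Prop :=
  ContDiff ℝ 2 Y ∧ ∀ t : ℝ, deriv (deriv Y) t + R t * Y t = 0

/-- A Lagrangian (self-conjugate) solution: the Wronskian `W(Y,Y)` vanishes. -/
def IsLagrangian {n : ℕ} (Y : ℝ → Matrix (Fin n) (Fin n) ℝ) : Prop :=
  ∀ t : ℝ, (deriv Y t)ᵀ * Y t = (Y t)ᵀ * deriv Y t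

/-!
The Wronskian `W(Y, Z) = Y'ᵀ Z - Yᵀ Z'` of two Jacobi solutions along a symmetric `R`
is constant, since its derivative is `Y''ᵀ Z - Yᵀ Z'' = Yᵀ (R - Rᵀ) Z = 0`; for
`U(0) = S(0) = 1` and `U` Lagrangian it equals `U'(0) - S'(0)`. The Lagrangian condition
makes `A' A⁻¹` symmetric, and then `A' A⁻¹ - B' B⁻¹ = (Aᵀ)⁻¹ W(A, B) B⁻¹` is pure algebra.
Applying this to `(U, S)` and to `(S, U)` gives both expressions for the difference.
-/

namespace Matrix

variable {m K : Type*} [Fintype m] [DecidableEq m] [CommRing K]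

theorem isSymm_mul_inv_of_transpose_mul_comm {A A' : Matrix m m K}
    (h : A'ᵀ * A = Aᵀ * A') (hA : IsUnit A) : (A' * A⁻¹).IsSymm := by
  have hdet : IsUnit A.det := (isUnit_iff_isUnit_det A).mp hA
  have hAT : IsUnit Aᵀ.det := by rwa [det_transpose]
  calc (A' * A⁻¹)ᵀ = Aᵀ⁻¹ * (A'ᵀ * A) * A⁻¹ := by
        rw [transpose_mul, transpose_nonsing_inv, Matrix.mul_assoc,
          mul_nonsing_inv_cancel_right _ _ hdet]
    _ = A' * A⁻¹ := by rw [h, nonsing_inv_mul_cancel_left _ _ hAT]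

theorem mul_inv_sub_mul_inv_eq {A A' B B' : Matrix m m K}
    (hA : IsUnit A) (hB : IsUnit B) (hsymm : (A' * A⁻¹).IsSymm) :
    A' * A⁻¹ - B' * B⁻¹ = Aᵀ⁻¹ * (A'ᵀ * B - Aᵀ * B') * B⁻¹ := by
  have hBdet : IsUnit B.det := (isUnit_iff_isUnit_det B).mp hB
  have hAT : IsUnit Aᵀ.det := by rw [det_transpose]; exact (isUnit_iff_isUnit_det A).mp hA
  rw [Matrix.mul_sub, Matrix.sub_mul, ← Matrix.mul_assoc Aᵀ⁻¹ A'ᵀ B,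
    mul_nonsing_inv_cancel_right _ _ hBdet, nonsing_inv_mul_cancel_left _ _ hAT,
    ← transpose_nonsing_inv, ← transpose_mul, hsymm.eq]

end Matrix

section Calculus

variable {m : Type*} [Fintype m] {f g : ℝ → Matrix m m ℝ} {f' g' : Matrix m m ℝ} {t : ℝ}

theorem HasDerivAt.matrix_mul [DecidableEq m] (hf : HasDerivAt f f' t) (hg : HasDerivAt g g' t) :
    HasDerivAt (fun s => f s * g s) (f' * g t + f t * g') t := by
  have h := (LinearMap.mul ℝ (Matrix m m ℝ)).toContinuousBilinearMap.hasDerivAt_of_bilinear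
    (fun _ => hf) (fun _ => hg)
  rw [add_comm] at h
  exact h

theorem HasDerivAt.matrix_transpose (hf : HasDerivAt f f' t) :
    HasDerivAt (fun s => (f s)ᵀ) f'ᵀ t :=
  (transposeLinearEquiv m m ℝ ℝ).toContinuousLinearEquiv.hasFDerivAt.comp_hasDerivAt t hf

end Calculus

noncomputable def wronskian {m : Type*} [Fintype m] (Y Z : ℝ → Matrix m m ℝ) (t : ℝ) :
    Matrix m m ℝ :=
  (deriv Y t)ᵀ * Z t - (Y t)ᵀ * deriv Z t

theorem IsLagrangian.wronskian_zero {n : ℕ} {Y Z : ℝ → Matrix (Fin n) (Fin n) ℝ}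
    (hY : IsLagrangian Y) (hY0 : Y 0 = 1) (hZ0 : Z 0 = 1) :
    wronskian Y Z 0 = deriv Y 0 - deriv Z 0 := by
  have hsymm : (deriv Y 0)ᵀ = deriv Y 0 := by simpa [hY0] using hY 0
  simp [wronskian, hY0, hZ0, hsymm]

namespace IsJacobi

variable {n : ℕ} {R Y Z : ℝ → Matrix (Fin n) (Fin n) ℝ}

theorem hasDerivAt (hY : IsJacobi R Y) (t : ℝ) : HasDerivAt Y (deriv Y t) t :=
  (hY.1.differentiable two_ne_zero t).hasDerivAt

theorem hasDerivAt_deriv (hY : IsJacobi R Y) (t : ℝ) :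
    HasDerivAt (deriv Y) (-(R t * Y t)) t := by
  have hY' : ContDiff ℝ 1 (deriv Y) := (contDiff_succ_iff_deriv.mp hY.1).2.2
  rw [← eq_neg_of_add_eq_zero_left (hY.2 t)]
  exact (hY'.differentiable one_ne_zero t).hasDerivAt

theorem hasDerivAt_wronskian (hY : IsJacobi R Y) (hZ : IsJacobi R Z)
    (hR : ∀ t, (R t)ᵀ = R t) (t : ℝ) : HasDerivAt (wronskian Y Z) 0 t := by
  have h := ((hY.hasDerivAt_deriv t).matrix_transpose.matrix_mul (hZ.hasDerivAt t)).sub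
    ((hY.hasDerivAt t).matrix_transpose.matrix_mul (hZ.hasDerivAt_deriv t))
  refine h.congr_deriv ?_
  rw [transpose_neg, transpose_mul, hR]
  noncomm_ring

theorem wronskian_eq (hY : IsJacobi R Y) (hZ : IsJacobi R Z) (hR : ∀ t, (R t)ᵀ = R t)
    (t : ℝ) : wronskian Y Z t = wronskian Y Z 0 :=
  is_const_of_deriv_eq_zero (fun s => (hY.hasDerivAt_wronskian hZ hR s).differentiableAt)
    (fun s => (hY.hasDerivAt_wronskian hZ hR s).deriv) t 0

end IsJacobi

theorem riccati_difference_identity_general {n : ℕ}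
    (R : ℝ → Matrix (Fin n) (Fin n) ℝ)
    (hRsym : ∀ t : ℝ, (R t)ᵀ = R t)
    (U S : ℝ → Matrix (Fin n) (Fin n) ℝ)
    (hU : IsJacobi R U) (hUL : IsLagrangian U) (hU0 : U 0 = 1)
    (hS : IsJacobi R S) (hSL : IsLagrangian S) (hS0 : S 0 = 1) :
    ∀ t : ℝ, IsUnit (U t) → IsUnit (S t) →
      (deriv U t * (U t)⁻¹)ᵀ = deriv U t * (U t)⁻¹ ∧
      (deriv S t * (S t)⁻¹)ᵀ = deriv S t * (S t)⁻¹ ∧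
      deriv U t * (U t)⁻¹ - deriv S t * (S t)⁻¹
        = ((U t)ᵀ)⁻¹ * (deriv U 0 - deriv S 0) * (S t)⁻¹ ∧
      ((U t)ᵀ)⁻¹ * (deriv U 0 - deriv S 0) * (S t)⁻¹
        = ((S t)ᵀ)⁻¹ * (deriv U 0 - deriv S 0) * (U t)⁻¹ := by
  intro t hUt hSt
  have hUsymm := isSymm_mul_inv_of_transpose_mul_comm (hUL t) hUt
  have hSsymm := isSymm_mul_inv_of_transpose_mul_comm (hSL t) hSt
  have hUS : deriv U t * (U t)⁻¹ - deriv S t * (S t)⁻¹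
      = ((U t)ᵀ)⁻¹ * (deriv U 0 - deriv S 0) * (S t)⁻¹ := by
    rw [← hUL.wronskian_zero hU0 hS0, ← hU.wronskian_eq hS hRsym t]
    exact mul_inv_sub_mul_inv_eq hUt hSt hUsymm
  have hSU : deriv S t * (S t)⁻¹ - deriv U t * (U t)⁻¹
      = ((S t)ᵀ)⁻¹ * (deriv S 0 - deriv U 0) * (U t)⁻¹ := by
    rw [← hSL.wronskian_zero hS0 hU0, ← hS.wronskian_eq hU hRsym t]
    exact mul_inv_sub_mul_inv_eq hSt hUt hSsymm
  refine ⟨hUsymm.eq, hSsymm.eq, hUS, ?_⟩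
  rw [← hUS, ← neg_sub (deriv S 0), mul_neg, neg_mul, ← hSU, neg_sub]

/-- For Lagrangian Jacobi solutions `U`, `S` with `U(0) = S(0) = 1`, the matrices
`U'(t)U(t)⁻¹` and `S'(t)S(t)⁻¹` are symmetric and
`U'(t)U(t)⁻¹ − S'(t)S(t)⁻¹ = (U(t)ᵀ)⁻¹(U'(0) − S'(0))S(t)⁻¹
  = (S(t)ᵀ)⁻¹(U'(0) − S'(0))U(t)⁻¹`. -/
theorem riccati_difference_identity {n : ℕ} (hn : 1 ≤ n)
    (R : ℝ → Matrix (Fin n) (Fin n) ℝ) (hRc : Continuous R)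
    (hRsym : ∀ t : ℝ, (R t)ᵀ = R t)
    (U S : ℝ → Matrix (Fin n) (Fin n) ℝ)
    (hU : IsJacobi R U) (hUL : IsLagrangian U) (hU0 : U 0 = 1)
    (hS : IsJacobi R S) (hSL : IsLagrangian S) (hS0 : S 0 = 1) :
    ∀ t : ℝ, IsUnit (U t) → IsUnit (S t) →
      (deriv U t * (U t)⁻¹)ᵀ = deriv U t * (U t)⁻¹ ∧
      (deriv S t * (S t)⁻¹)ᵀ = deriv S t * (S t)⁻¹ ∧
      deriv U t * (U t)⁻¹ - deriv S t * (S t)⁻¹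
        = ((U t)ᵀ)⁻¹ * (deriv U 0 - deriv S 0) * (S t)⁻¹ ∧
      ((U t)ᵀ)⁻¹ * (deriv U 0 - deriv S 0) * (S t)⁻¹
        = ((S t)ᵀ)⁻¹ * (deriv U 0 - deriv S 0) * (U t)⁻¹ :=
  riccati_difference_identity_general R hRsym U S hU hUL hU0 hS hSL hS0
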